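/- arXiv:2009.02611 — 2 statements merged into one kernel-verified Lean document; each statement's English description precedes it below -/
import Mathlib

section
/- Let G be a connected finite graph with n vertices and minimum degree at least δ ≥ 2. Then the diameter D of G satisfies (δ+1)·⌊(D+2)/3⌋ ≤ n, and hence D ≤ 3n/(δ+1) - 1. -/
open SimpleGraph Finset

lemma dist_getVert_le' {V : Type*} {G : SimpleGraph V} (hconn : G.Connected) {u v : V} (p : G.Walk u v) (i : ℕ) :
    G.dist u (p.getVert i) ≤ i := by
  induction i with
  | zero => simp [SimpleGraph.Walk.getVert_zero]
  | succ i ih =>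
    by_cases h : p.length ≤ i
    · rw [p.getVert_of_length_le (le_trans h (Nat.le_succ i))]
      rw [p.getVert_of_length_le h] at ih
      exact le_trans ih (Nat.le_succ i)
    · have hadj := p.adj_getVert_succ (Nat.lt_of_not_le h)
      calc G.dist u (p.getVert (i+1))
          ≤ G.dist u (p.getVert i) + G.dist (p.getVert i) (p.getVert (i+1)) :=
            hconn.dist_triangle
        _ ≤ i + 1 := by
            have : G.dist (p.getVert i) (p.getVert (i+1)) ≤ 1 := by
              simpa using SimpleGraph.dist_le hadj.toWalk
            omega

theorem stmt_10 {V : Type*} [Fintype V] (G : SimpleGraph V) [DecidableRel G.Adj]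
    (hconn : G.Connected) (δ n D : ℕ) (hδ : 2 ≤ δ) (hdeg : δ ≤ G.minDegree)
    (hn : n = Fintype.card V) (hD : D = G.diam) :
    (δ + 1) * ((D + 2) / 3) ≤ n ∧ (D : ℝ) ≤ 3 * n / (δ + 1) - 1 := by
  classical
  have hne : Nonempty V := hconn.nonempty
  obtain ⟨u, v, huv⟩ := G.exists_dist_eq_diam
  obtain ⟨p, hp⟩ := (hconn u v).exists_walk_length_eq_dist
  have hDuv : G.dist u v = D := by rw [huv, ← hD]
  have hpl : p.length = D := by rw [hp, hDuv]
  set m := D / 3 with hm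
  set f : ℕ → V := fun i => p.getVert (3 * i) with hf
  have hdist : ∀ i, 3 * i ≤ D → G.dist u (f i) = 3 * i := by
    intro i hi
    have h1 : G.dist u (f i) ≤ 3 * i := dist_getVert_le' hconn p (3 * i)
    have h2 : G.dist (f i) v ≤ D - 3 * i := by
      have h5 := dist_getVert_le' hconn p.reverse (p.length - 3 * i)
      rw [p.getVert_reverse] at h5
      rw [Nat.sub_sub_self (by omega : 3 * i ≤ p.length)] at h5
      have h6 : G.dist (f i) v = G.dist v (p.getVert (3 * i)) :=
        SimpleGraph.dist_comm
      omega
    have h3 : G.dist u v ≤ G.dist u (f i) + G.dist (f i) v := hconn.dist_triangle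
    omega
  have hdf : ∀ i j, i ≤ m → j ≤ m → i ≠ j → 3 ≤ G.dist (f i) (f j) := by
    intro i j hi hj hij
    have h1 := hdist i (by omega)
    have h2 := hdist j (by omega)
    have t1 : G.dist u (f j) ≤ G.dist u (f i) + G.dist (f i) (f j) :=
      hconn.dist_triangle
    have t2 : G.dist u (f i) ≤ G.dist u (f j) + G.dist (f j) (f i) :=
      hconn.dist_triangle
    have t3 : G.dist (f j) (f i) = G.dist (f i) (f j) := SimpleGraph.dist_comm
    omega
  set N : ℕ → Finset V := fun i => insert (f i) (G.neighborFinset (f i)) with hN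
  have hcard : ∀ i, δ + 1 ≤ (N i).card := by
    intro i
    have hni : (N i).card = G.degree (f i) + 1 := by
      rw [hN]
      simp only
      rw [Finset.card_insert_of_notMem (G.notMem_neighborFinset_self _),
        G.card_neighborFinset_eq_degree]
    have := G.minDegree_le_degree (f i)
    omega
  have hdisj : ∀ i ∈ Finset.range (m + 1), ∀ j ∈ Finset.range (m + 1), i ≠ j →
      Disjoint (N i) (N j) := by
    intro i hi j hj hij
    rw [Finset.mem_range] at hi hj
    rw [Finset.disjoint_left]
    intro x hxi hxj
    have hmem : ∀ k, x ∈ N k → G.dist (f k) x ≤ 1 := by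
      intro k hk
      rw [hN] at hk
      simp only [Finset.mem_insert, SimpleGraph.mem_neighborFinset] at hk
      rcases hk with h | h
      · simp [h, SimpleGraph.dist_self]
      · simpa using SimpleGraph.dist_le h.toWalk
    have hd1 := hmem i hxi
    have hd2 := hmem j hxj
    have t1 : G.dist (f i) (f j) ≤ G.dist (f i) x + G.dist x (f j) :=
      hconn.dist_triangle
    have t2 : G.dist x (f j) = G.dist (f j) x := SimpleGraph.dist_comm
    have := hdf i j (by omega) (by omega) hij
    omega
  have hkey : (δ + 1) * (m + 1) ≤ n := by
    have h1 : ((Finset.range (m + 1)).biUnion N).card ≤ Fintype.card V := by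
      rw [← Finset.card_univ]
      exact Finset.card_le_card (Finset.subset_univ _)
    rw [Finset.card_biUnion hdisj] at h1
    have h2 : (δ + 1) * (m + 1) ≤ ∑ i ∈ Finset.range (m + 1), (N i).card := by
      calc (δ + 1) * (m + 1) = ∑ _i ∈ Finset.range (m + 1), (δ + 1) := by
            rw [Finset.sum_const, Finset.card_range]; ring
        _ ≤ _ := Finset.sum_le_sum (fun i _ => hcard i)
    omega
  constructor
  · have h4 : (D + 2) / 3 ≤ m + 1 := by omega
    calc (δ + 1) * ((D + 2) / 3) ≤ (δ + 1) * (m + 1) :=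
          Nat.mul_le_mul_left _ h4
      _ ≤ n := hkey
  · have h3 : (D + 1) * (δ + 1) ≤ 3 * n := by
      have h5 : 3 * m + 3 ≥ D + 1 := by omega
      calc (D + 1) * (δ + 1) ≤ (3 * m + 3) * (δ + 1) := Nat.mul_le_mul_right _ h5
        _ = 3 * ((δ + 1) * (m + 1)) := by ring
        _ ≤ 3 * n := by omega
    have hpos : (0 : ℝ) < (δ : ℝ) + 1 := by positivity
    rw [le_sub_iff_add_le, le_div_iff₀ hpos]
    have h6 := (Nat.cast_le (α := ℝ)).mpr h3
    push_cast at h6 ⊢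
    nlinarith
end

section
/- Let φ, μ, ψ, α₁, α₂ be nonnegative reals satisfying: μ + α₁ + α₂ ≤ 1; 3ψ ≤ 2; 12φ + 4μ - 2α₁ - α₂ ≤ 28; 3φ + ψ - α₁ - α₂ ≤ 7; and φ - 3ψ + 3α₁ ≤ 3. Then φ ≤ 57/23. -/
theorem stmt_13 (φ μ ψ α₁ α₂ : ℝ) (hφ : 0 ≤ φ) (hμ : 0 ≤ μ) (hψ : 0 ≤ ψ)
    (hα₁ : 0 ≤ α₁) (hα₂ : 0 ≤ α₂)
    (h1 : μ + α₁ + α₂ ≤ 1) (h2 : 3 * ψ ≤ 2)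
    (h3 : 12 * φ + 4 * μ - 2 * α₁ - α₂ ≤ 28)
    (h4 : 3 * φ + ψ - α₁ - α₂ ≤ 7)
    (h5 : φ - 3 * ψ + 3 * α₁ ≤ 3) :
    φ ≤ 57 / 23 := by
  linarith
end
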